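/- arXiv:0908.0156 — 3 statements merged into one kernel-verified Lean document; each statement's English description precedes it below -/
import Mathlib

section
/- Let σ > 0 and l₁, l₂ > 0 with sin(σl₁) ≠ 0 and sin(σl₂) ≠ 0. Set S = diag(sin σl₁, sin σl₂), C = diag(cos σl₁, cos σl₂); let B be a real symmetric 2×2 matrix, δ ∈ ℝ² a vector, and c ∈ ℝ. Set P = C + SB and assume I - P² is invertible; set n = ⟨δ, (I - P²)⁻¹Sδ⟩ and m = c + ⟨δ, (I - P²)⁻¹PSδ⟩ and assume n ≠ 0. Suppose vectors φ₀, φ₁ ∈ ℝ² and scalars p₀, q₀, p₁, q₁ ∈ ℝ satisfy the four equations: -(CS⁻¹ + B)φ₀ + S⁻¹φ₁ = p₀ δ; -q₀ = ⟨δ, φ₀⟩ + c p₀; -(CS⁻¹ + B)φ₁ + S⁻¹φ₀ = p₁ δ; q₁ = ⟨δ, φ₁⟩ + c p₁. Then (p₁, q₁)ᵀ = T_σ (p₀, q₀)ᵀ, where T_σ is the 2×2 matrix T_σ = -[[m/n, 1/n], [(m² - n²)/n, m/n]]. -/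
open Matrix

/-!
Multiplying the two arc equations by `S` turns them into the one-step relations
`φ₁ = P φ₀ + p₀ Sδ` and `φ₀ = P φ₁ + p₁ Sδ`. Substituting one into the other gives
`(1 - P²) φ₀ = p₀ PSδ + p₁ Sδ`, so `⟨δ, φ₀⟩ = p₀ (m - c) + p₁ n`, and symmetrically for `φ₁`.
The two vertex equations then read `-q₀ = m p₀ + n p₁` and `q₁ = m p₁ + n p₀`; solving the
first for `p₁` and substituting into the second gives `T_σ`.
-/

namespace Matrix

variable {ι R : Type*} [Fintype ι] [DecidableEq ι] [CommRing R]

theorem eq_mulVec_add_smul_of_neg_mulVec_add_inv_mulVec {S C B : Matrix ι ι R}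
    (hS : IsUnit S.det) (hSC : Commute S C) {φ ψ δ : ι → R} {p : R}
    (h : -((C * S⁻¹ + B) *ᵥ φ) + S⁻¹ *ᵥ ψ = p • δ) :
    ψ = (C + S * B) *ᵥ φ + p • S *ᵥ δ := by
  have hSS : S * S⁻¹ = 1 := mul_nonsing_inv S hS
  have hP : S * (C * S⁻¹ + B) = C + S * B := by
    rw [mul_add, ← mul_assoc, hSC.eq, mul_assoc, hSS, mul_one]
  have := congrArg (S *ᵥ ·) h
  simp only [mulVec_add, mulVec_neg, mulVec_smul, mulVec_mulVec, hP, hSS, one_mulVec] at this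
  linear_combination (norm := module) this

theorem eq_smul_add_smul_of_mulVec_cycle {P : Matrix ι ι R} (hP : IsUnit (1 - P ^ 2).det)
    {φ ψ v : ι → R} {p q : R} (hψ : ψ = P *ᵥ φ + p • v) (hφ : φ = P *ᵥ ψ + q • v) :
    φ = p • ((1 - P ^ 2)⁻¹ * P) *ᵥ v + q • (1 - P ^ 2)⁻¹ *ᵥ v := by
  have hQ : (1 - P ^ 2) *ᵥ φ = p • P *ᵥ v + q • v := by
    rw [sub_mulVec, one_mulVec]
    nth_rw 1 [hφ]
    rw [hψ, pow_two, ← mulVec_mulVec]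
    simp only [mulVec_add, mulVec_smul]
    abel
  calc φ = (1 - P ^ 2)⁻¹ *ᵥ (1 - P ^ 2) *ᵥ φ := by
        rw [mulVec_mulVec, nonsing_inv_mul _ hP, one_mulVec]
    _ = _ := by simp only [hQ, mulVec_add, mulVec_smul, mulVec_mulVec]

end Matrix

theorem vec_eq_neg_transfer_mulVec {K : Type*} [Field K] {m n p₀ q₀ p₁ q₁ : K} (hn : n ≠ 0)
    (h₀ : -q₀ = m * p₀ + n * p₁) (h₁ : q₁ = m * p₁ + n * p₀) :
    ![p₁, q₁] = (-(!![m / n, 1 / n; (m ^ 2 - n ^ 2) / n, m / n])) *ᵥ ![p₀, q₀] := by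
  ext i
  fin_cases i <;>
    simp only [mulVec, dotProduct, Fin.sum_univ_two, Matrix.neg_apply, of_apply, cons_val',
      cons_val_zero, cons_val_one, cons_val_fin_one, Fin.zero_eta, Fin.mk_one] <;>
    field_simp
  · linear_combination -h₀
  · linear_combination n * h₁ - m * h₀

theorem necklace_loop_transfer_matrix_general (σ l₁ l₂ : ℝ)
    (hs₁ : Real.sin (σ * l₁) ≠ 0) (hs₂ : Real.sin (σ * l₂) ≠ 0)
    (S C : Matrix (Fin 2) (Fin 2) ℝ)
    (hS : S = Matrix.diagonal ![Real.sin (σ * l₁), Real.sin (σ * l₂)])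
    (hC : C = Matrix.diagonal ![Real.cos (σ * l₁), Real.cos (σ * l₂)])
    (B : Matrix (Fin 2) (Fin 2) ℝ) (δ : Fin 2 → ℝ) (c : ℝ)
    (P : Matrix (Fin 2) (Fin 2) ℝ) (hP : P = C + S * B)
    (hinv : IsUnit (1 - P ^ 2))
    (n m : ℝ)
    (hn : n = δ ⬝ᵥ ((1 - P ^ 2)⁻¹ * S).mulVec δ)
    (hm : m = c + δ ⬝ᵥ ((1 - P ^ 2)⁻¹ * (P * S)).mulVec δ)
    (hn0 : n ≠ 0)
    (φ₀ φ₁ : Fin 2 → ℝ) (p₀ q₀ p₁ q₁ : ℝ)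
    (h1 : -(C * S⁻¹ + B).mulVec φ₀ + S⁻¹.mulVec φ₁ = p₀ • δ)
    (h2 : -q₀ = δ ⬝ᵥ φ₀ + c * p₀)
    (h3 : -(C * S⁻¹ + B).mulVec φ₁ + S⁻¹.mulVec φ₀ = p₁ • δ)
    (h4 : q₁ = δ ⬝ᵥ φ₁ + c * p₁) :
    ![p₁, q₁] = (-(!![m / n, 1 / n; (m ^ 2 - n ^ 2) / n, m / n])).mulVec ![p₀, q₀] := by
  have hSdet : IsUnit S.det := by
    rw [← isUnit_iff_isUnit_det, hS, isUnit_diagonal, Pi.isUnit_iff]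
    simp [Fin.forall_fin_two, hs₁, hs₂]
  have hSC : Commute S C := hS ▸ hC ▸ commute_diagonal _ _
  have hQ : IsUnit (1 - P ^ 2).det := (isUnit_iff_isUnit_det _).mp hinv
  have e₁ : φ₁ = P *ᵥ φ₀ + p₀ • S *ᵥ δ :=
    hP ▸ eq_mulVec_add_smul_of_neg_mulVec_add_inv_mulVec hSdet hSC h1
  have e₀ : φ₀ = P *ᵥ φ₁ + p₁ • S *ᵥ δ :=
    hP ▸ eq_mulVec_add_smul_of_neg_mulVec_add_inv_mulVec hSdet hSC h3
  have dot_eq {φ ψ : Fin 2 → ℝ} {p q : ℝ} (hψ : ψ = P *ᵥ φ + p • S *ᵥ δ)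
      (hφ : φ = P *ᵥ ψ + q • S *ᵥ δ) : δ ⬝ᵥ φ = p * (m - c) + q * n := by
    rw [eq_smul_add_smul_of_mulVec_cycle hQ hψ hφ, hn, hm]
    simp only [mulVec_mulVec, mul_assoc, dotProduct_add, dotProduct_smul, smul_eq_mul]
    ring
  refine vec_eq_neg_transfer_mulVec hn0 ?_ ?_
  · linear_combination h2 + dot_eq e₁ e₀
  · linear_combination h4 + dot_eq e₀ e₁

/-- The transfer matrix over the loop of the necklace graph: if the Cauchy data
`(p₀, q₀)` and `(p₁, q₁)` on the straight edges and the arch values `φ₀, φ₁` satisfy the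
vertex (gluing) equations, then `(p₁, q₁)ᵀ = T_σ (p₀, q₀)ᵀ` with
`T_σ = -[[m/n, 1/n], [(m² - n²)/n, m/n]]`. -/
theorem necklace_loop_transfer_matrix (σ l₁ l₂ : ℝ) (hσ : 0 < σ)
    (hl₁ : 0 < l₁) (hl₂ : 0 < l₂)
    (hs₁ : Real.sin (σ * l₁) ≠ 0) (hs₂ : Real.sin (σ * l₂) ≠ 0)
    (S C : Matrix (Fin 2) (Fin 2) ℝ)
    (hS : S = Matrix.diagonal ![Real.sin (σ * l₁), Real.sin (σ * l₂)])
    (hC : C = Matrix.diagonal ![Real.cos (σ * l₁), Real.cos (σ * l₂)])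
    (B : Matrix (Fin 2) (Fin 2) ℝ) (hB : Bᵀ = B) (δ : Fin 2 → ℝ) (c : ℝ)
    (P : Matrix (Fin 2) (Fin 2) ℝ) (hP : P = C + S * B)
    (hinv : IsUnit (1 - P ^ 2))
    (n m : ℝ)
    (hn : n = δ ⬝ᵥ ((1 - P ^ 2)⁻¹ * S).mulVec δ)
    (hm : m = c + δ ⬝ᵥ ((1 - P ^ 2)⁻¹ * (P * S)).mulVec δ)
    (hn0 : n ≠ 0)
    (φ₀ φ₁ : Fin 2 → ℝ) (p₀ q₀ p₁ q₁ : ℝ)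
    (h1 : -(C * S⁻¹ + B).mulVec φ₀ + S⁻¹.mulVec φ₁ = p₀ • δ)
    (h2 : -q₀ = δ ⬝ᵥ φ₀ + c * p₀)
    (h3 : -(C * S⁻¹ + B).mulVec φ₁ + S⁻¹.mulVec φ₀ = p₁ • δ)
    (h4 : q₁ = δ ⬝ᵥ φ₁ + c * p₁) :
    ![p₁, q₁] = (-(!![m / n, 1 / n; (m ^ 2 - n ^ 2) / n, m / n])).mulVec ![p₀, q₀] :=
  necklace_loop_transfer_matrix_general σ l₁ l₂ hs₁ hs₂ S C hS hC B δ c P hP hinv n m hn hm hn0 φ₀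
    φ₁ p₀ q₀ p₁ q₁ h1 h2 h3 h4
end

section
/- Let σ > 0 and l₁, l₂ > 0 with sin(σl₁) ≠ 0, sin(σl₂) ≠ 0. Set S = diag(sin σl₁, sin σl₂), C = diag(cos σl₁, cos σl₂); let B be a real symmetric 2×2 matrix, δ ∈ ℝ², c ∈ ℝ, P = C + SB, and assume I - P and I - P² are invertible. Set n = ⟨δ, (I - P²)⁻¹Sδ⟩ and m = c + ⟨δ, (I - P²)⁻¹PSδ⟩, and let T = diag(tan(σl₁/2), tan(σl₂/2)). If T - B is invertible, then m + n = c + ⟨δ, (T - B)⁻¹δ⟩. -/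
open Matrix

lemma sin_mul_tan_half (θ : ℝ) (hs : Real.sin θ ≠ 0) :
    Real.sin θ * Real.tan (θ / 2) = 1 - Real.cos θ := by
  have h2 : Real.sin θ = 2 * Real.sin (θ / 2) * Real.cos (θ / 2) := by
    rw [← Real.sin_two_mul]; ring_nf
  have hc : Real.cos (θ / 2) ≠ 0 := by
    intro h; apply hs; rw [h2, h]; ring
  have hcos : Real.cos θ = 1 - 2 * Real.sin (θ / 2) ^ 2 := by
    have h := Real.cos_two_mul (θ / 2)
    have hpy := Real.sin_sq_add_cos_sq (θ / 2)
    have h2 : 2 * (θ / 2) = θ := by ring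
    rw [h2] at h
    linarith
  rw [Real.tan_eq_sin_div_cos, h2, hcos]
  field_simp
  ring

/-- For the necklace loop quantities `m, n` one has `m + n = c + ⟨δ, (T - B)⁻¹δ⟩`
where `T = diag(tan(σl₁/2), tan(σl₂/2))`. -/
theorem necklace_m_plus_n (σ l₁ l₂ : ℝ) (hσ : 0 < σ) (hl₁ : 0 < l₁) (hl₂ : 0 < l₂)
    (hs₁ : Real.sin (σ * l₁) ≠ 0) (hs₂ : Real.sin (σ * l₂) ≠ 0)
    (S C : Matrix (Fin 2) (Fin 2) ℝ)
    (hS : S = Matrix.diagonal ![Real.sin (σ * l₁), Real.sin (σ * l₂)])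
    (hC : C = Matrix.diagonal ![Real.cos (σ * l₁), Real.cos (σ * l₂)])
    (B : Matrix (Fin 2) (Fin 2) ℝ) (hB : Bᵀ = B) (δ : Fin 2 → ℝ) (c : ℝ)
    (P : Matrix (Fin 2) (Fin 2) ℝ) (hP : P = C + S * B)
    (hIP : IsUnit (1 - P)) (hIP2 : IsUnit (1 - P ^ 2))
    (n m : ℝ)
    (hn : n = δ ⬝ᵥ ((1 - P ^ 2)⁻¹ * S).mulVec δ)
    (hm : m = c + δ ⬝ᵥ ((1 - P ^ 2)⁻¹ * (P * S)).mulVec δ)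
    (T : Matrix (Fin 2) (Fin 2) ℝ)
    (hT : T = Matrix.diagonal ![Real.tan (σ * l₁ / 2), Real.tan (σ * l₂ / 2)])
    (hTB : IsUnit (T - B)) :
    m + n = c + δ ⬝ᵥ (T - B)⁻¹.mulVec δ := by
  -- S * T = 1 - C
  have hST : S * T = 1 - C := by
    subst hS hT hC
    ext i j
    fin_cases i <;> fin_cases j <;>
      simp [Matrix.mul_apply, Fin.sum_univ_two, Matrix.one_apply,
        sin_mul_tan_half _ hs₁, sin_mul_tan_half _ hs₂]
  have hSTB : S * (T - B) = 1 - P := by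
    rw [Matrix.mul_sub, hST, hP, sub_add_eq_sub_sub]
  -- (T - B)⁻¹ = (1 - P)⁻¹ * S
  have hIPdet : IsUnit (1 - P).det := (Matrix.isUnit_iff_isUnit_det _).mp hIP
  have hIP2det : IsUnit (1 - P ^ 2).det := (Matrix.isUnit_iff_isUnit_det _).mp hIP2
  have hinv : (T - B)⁻¹ = (1 - P)⁻¹ * S := by
    apply Matrix.inv_eq_left_inv
    rw [Matrix.mul_assoc, hSTB, Matrix.nonsing_inv_mul _ hIPdet]
  -- (1 - P²)⁻¹ * (1 + P) = (1 - P)⁻¹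
  have hfac : (1 - P ^ 2)⁻¹ * (1 + P) = (1 - P)⁻¹ := by
    symm
    apply Matrix.inv_eq_left_inv
    rw [Matrix.mul_assoc]
    have : (1 + P) * (1 - P) = 1 - P ^ 2 := by noncomm_ring
    rw [this, Matrix.nonsing_inv_mul _ hIP2det]
  have key : (1 - P ^ 2)⁻¹ * (P * S) + (1 - P ^ 2)⁻¹ * S = (T - B)⁻¹ := by
    rw [hinv, ← hfac]
    rw [Matrix.mul_assoc, Matrix.add_mul, Matrix.one_mul, Matrix.mul_add, add_comm]
  rw [hm, hn, add_assoc, ← dotProduct_add, ← Matrix.add_mulVec, key]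
end

section
/- Let σ > 0 and l₁, l₂ > 0 with sin(σl₁) ≠ 0, sin(σl₂) ≠ 0 and cos(σl₁) ≠ ±1, cos(σl₂) ≠ ±1. Set S = diag(sin σl₁, sin σl₂), C = diag(cos σl₁, cos σl₂); let B be a real symmetric 2×2 matrix, δ ∈ ℝ², c ∈ ℝ, P = C + SB, and assume I + P is invertible. Set n = ⟨δ, (I - P²)⁻¹Sδ⟩ and m = c + ⟨δ, (I - P²)⁻¹PSδ⟩ (assuming I - P² invertible), and let T = diag(tan(σl₁/2), tan(σl₂/2)), which is invertible. If T⁻¹ + B is invertible, then m - n = c - ⟨δ, (T⁻¹ + B)⁻¹δ⟩. -/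
open Matrix

/-!
By the half-angle formula `sin x / tan (x / 2) = 1 + cos x` we have `S T⁻¹ = I + C`, hence
`I + P = S (T⁻¹ + B)` and `(I + P)⁻¹ S = (T⁻¹ + B)⁻¹`. On the other side
`m - n = c - ⟨δ, (I - P²)⁻¹ (I - P) S δ⟩`, and `(I - P²)⁻¹ (I - P) = (I + P)⁻¹`.
-/

namespace Real

theorem tan_half_mul_one_add_cos (x : ℝ) :
    tan (x / 2) * (1 + cos x) = sin x := by
  by_cases h : cos x = -1
  · rw [h, sin_eq_zero_iff_cos_eq.mpr (Or.inr h), add_neg_cancel, mul_zero]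
  · rw [cos_eq_two_mul_tan_half_div_one_sub_tan_half_sq x h,
      sin_eq_two_mul_tan_half_div_one_add_tan_half_sq x]
    field_simp
    ring

theorem tan_half_ne_zero {x : ℝ} (hs : sin x ≠ 0) : tan (x / 2) ≠ 0 :=
  left_ne_zero_of_mul ((tan_half_mul_one_add_cos x).trans_ne hs)

theorem sin_mul_inv_tan_half {x : ℝ} (hs : sin x ≠ 0) :
    sin x * (tan (x / 2))⁻¹ = 1 + cos x := by
  rw [← tan_half_mul_one_add_cos x, mul_comm, inv_mul_cancel_left₀ (tan_half_ne_zero hs)]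

end Real

namespace Matrix

variable {n α : Type*} [Fintype n] [DecidableEq n]

theorem inv_diagonal_of_ne_zero [Field α] {t : n → α} (ht : ∀ i, t i ≠ 0) :
    (diagonal t)⁻¹ = diagonal t⁻¹ :=
  inv_eq_left_inv <| by
    rw [diagonal_mul_diagonal, ← diagonal_one]
    exact congrArg diagonal (funext fun i => inv_mul_cancel₀ (ht i))

variable [CommRing α]

theorem inv_one_sub_sq_mul_one_sub (P : Matrix n n α) (h : IsUnit (1 - P ^ 2)) :
    (1 - P ^ 2)⁻¹ * (1 - P) = (1 + P)⁻¹ := by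
  refine (inv_eq_left_inv ?_).symm
  rw [mul_assoc, show (1 - P) * (1 + P) = 1 - P ^ 2 by noncomm_ring]
  exact nonsing_inv_mul _ ((isUnit_iff_isUnit_det _).mp h)

theorem inv_mul_eq_inv_of_eq_mul {A S K : Matrix n n α} (hA : A = S * K) (h : IsUnit A) :
    A⁻¹ * S = K⁻¹ := by
  refine (inv_eq_left_inv ?_).symm
  rw [mul_assoc, ← hA]
  exact nonsing_inv_mul _ ((isUnit_iff_isUnit_det _).mp h)

end Matrix

theorem necklace_m_minus_n_general (σ l₁ l₂ : ℝ)
    (hs₁ : Real.sin (σ * l₁) ≠ 0) (hs₂ : Real.sin (σ * l₂) ≠ 0)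
    (S C : Matrix (Fin 2) (Fin 2) ℝ)
    (hS : S = Matrix.diagonal ![Real.sin (σ * l₁), Real.sin (σ * l₂)])
    (hC : C = Matrix.diagonal ![Real.cos (σ * l₁), Real.cos (σ * l₂)])
    (B : Matrix (Fin 2) (Fin 2) ℝ) (δ : Fin 2 → ℝ) (c : ℝ)
    (P : Matrix (Fin 2) (Fin 2) ℝ) (hP : P = C + S * B)
    (hIP : IsUnit (1 + P)) (hIP2 : IsUnit (1 - P ^ 2))
    (n m : ℝ)
    (hn : n = δ ⬝ᵥ ((1 - P ^ 2)⁻¹ * S).mulVec δ)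
    (hm : m = c + δ ⬝ᵥ ((1 - P ^ 2)⁻¹ * (P * S)).mulVec δ)
    (T : Matrix (Fin 2) (Fin 2) ℝ)
    (hT : T = Matrix.diagonal ![Real.tan (σ * l₁ / 2), Real.tan (σ * l₂ / 2)]) :
    IsUnit T ∧ m - n = c - δ ⬝ᵥ (T⁻¹ + B)⁻¹.mulVec δ := by
  have htan : ∀ i, ![Real.tan (σ * l₁ / 2), Real.tan (σ * l₂ / 2)] i ≠ 0 := by
    intro i
    fin_cases i
    exacts [Real.tan_half_ne_zero hs₁, Real.tan_half_ne_zero hs₂]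
  refine ⟨hT ▸ isUnit_diagonal.mpr (Pi.isUnit_iff.mpr fun i => (htan i).isUnit), ?_⟩
  have hST : S * T⁻¹ = 1 + C := by
    rw [hS, hT, hC, inv_diagonal_of_ne_zero htan, diagonal_mul_diagonal, ← diagonal_one,
      diagonal_add]
    congr 1
    ext i
    fin_cases i
    exacts [Real.sin_mul_inv_tan_half hs₁, Real.sin_mul_inv_tan_half hs₂]
  have hfactor : 1 + P = S * (T⁻¹ + B) := by
    rw [hP, mul_add, hST, add_assoc]
  calc m - n = c - δ ⬝ᵥ ((1 - P ^ 2)⁻¹ * (1 - P) * S) *ᵥ δ := by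
        rw [hm, hn, mul_assoc, sub_mul, one_mul, mul_sub, sub_mulVec, dotProduct_sub]
        ring
    _ = c - δ ⬝ᵥ (T⁻¹ + B)⁻¹ *ᵥ δ := by
      rw [inv_one_sub_sq_mul_one_sub P hIP2, inv_mul_eq_inv_of_eq_mul hfactor hIP]

/-- For the necklace loop quantities `m, n` one has `m - n = c - ⟨δ, (T⁻¹ + B)⁻¹δ⟩`
where `T = diag(tan(σl₁/2), tan(σl₂/2))` (which is invertible under the hypotheses). -/
theorem necklace_m_minus_n (σ l₁ l₂ : ℝ) (hσ : 0 < σ) (hl₁ : 0 < l₁) (hl₂ : 0 < l₂)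
    (hs₁ : Real.sin (σ * l₁) ≠ 0) (hs₂ : Real.sin (σ * l₂) ≠ 0)
    (hc₁ : Real.cos (σ * l₁) ≠ 1) (hc₁' : Real.cos (σ * l₁) ≠ -1)
    (hc₂ : Real.cos (σ * l₂) ≠ 1) (hc₂' : Real.cos (σ * l₂) ≠ -1)
    (S C : Matrix (Fin 2) (Fin 2) ℝ)
    (hS : S = Matrix.diagonal ![Real.sin (σ * l₁), Real.sin (σ * l₂)])
    (hC : C = Matrix.diagonal ![Real.cos (σ * l₁), Real.cos (σ * l₂)])
    (B : Matrix (Fin 2) (Fin 2) ℝ) (hB : Bᵀ = B) (δ : Fin 2 → ℝ) (c : ℝ)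
    (P : Matrix (Fin 2) (Fin 2) ℝ) (hP : P = C + S * B)
    (hIP : IsUnit (1 + P)) (hIP2 : IsUnit (1 - P ^ 2))
    (n m : ℝ)
    (hn : n = δ ⬝ᵥ ((1 - P ^ 2)⁻¹ * S).mulVec δ)
    (hm : m = c + δ ⬝ᵥ ((1 - P ^ 2)⁻¹ * (P * S)).mulVec δ)
    (T : Matrix (Fin 2) (Fin 2) ℝ)
    (hT : T = Matrix.diagonal ![Real.tan (σ * l₁ / 2), Real.tan (σ * l₂ / 2)])
    (hTB : IsUnit (T⁻¹ + B)) :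
    IsUnit T ∧ m - n = c - δ ⬝ᵥ (T⁻¹ + B)⁻¹.mulVec δ :=
  necklace_m_minus_n_general σ l₁ l₂ hs₁ hs₂ S C hS hC B δ c P hP hIP hIP2 n m hn hm T hT
end
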